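/- arXiv:1801.06387 — 4 statements merged into one kernel-verified Lean document; each statement's English description precedes it below -/
import Mathlib

section
/- The off-diagonal cofactor of A(m+1): for i ≠ j, the (i,j) minor of the (m+1)×(m+1) matrix with entries a_i δ_{ij} + a_0 satisfies (-1)^{i+j}·|A^{i,j}| = −π(m+1)/(a_i a_j), where π(m+1) = ∏_{k=0}^{m+1} a_k. -/
/-!
Write `A = diag(a₁, …, a_{m+1}) + a₀ J` with `J` the all-ones matrix. The cofactor is the
determinant of `A` with row `j` replaced by the unit row `e_i`. Two row operations (clear row `i`
against `e_i`, then clear the constant part of the other rows against row `i`) and one column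
operation turn this into a diagonal matrix with rows `i` and `j` swapped, whose determinant is
`-a₀ ∏_{k ≠ i, j} a_k`. No division is needed, so this holds over any commutative ring.
-/

open Finset

namespace Matrix

variable {n R : Type*} [Fintype n] [DecidableEq n] [CommRing R]

theorem det_eq_of_forall_col_eq_smul_add_const {A B : Matrix n n R} (c : n → R) (k : n)
    (hk : c k = 0) (A_eq : ∀ i j, A i j = B i j + c j * B i k) : det A = det B := by
  rw [← det_transpose A, ← det_transpose B]
  exact det_eq_of_forall_row_eq_smul_add_const c k hk fun i j => A_eq j i

theorem det_updateRow_single_updateRow_const_diagonal (d : n → R) (c : R) {i j : n}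
    (hij : i ≠ j) :
    (((diagonal d).updateRow i fun _ => c).updateRow j (Pi.single i 1)).det =
      -(c * ∏ k ∈ ({i, j} : Finset n)ᶜ, d k) := by
  set e : n → R := fun k => if k = i then 1 else if k = j then c else d k
  have hcol : (((diagonal d).updateRow i fun _ => c).updateRow j (Pi.single i 1)).det =
      ((diagonal e).submatrix (Equiv.swap i j) id).det := by
    refine det_eq_of_forall_col_eq_smul_add_const (fun q => if q = j then 0 else 1) j
      (by simp) fun p q => ?_
    rcases eq_or_ne p j with rfl | hpj
    · by_cases hqi : q = i <;> by_cases hqj : q = p <;>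
        simp_all [e, diagonal_apply, Pi.single_apply, eq_comm]
    rcases eq_or_ne p i with rfl | hpi
    · by_cases hqj : q = j <;> simp_all [e, eq_comm]
    · rcases eq_or_ne p q with rfl | hpq
      · simp [e, Equiv.swap_apply_of_ne_of_ne hpi hpj, hpi, hpj]
      · simp [e, Equiv.swap_apply_of_ne_of_ne hpi hpj, hpi, hpj, hpq]
  have hprod : ∏ k, e k = c * ∏ k ∈ ({i, j} : Finset n)ᶜ, d k := by
    rw [← prod_mul_prod_compl {i, j}, prod_pair hij]
    simp only [e, if_pos rfl, if_neg hij.symm, one_mul]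
    congr 1
    refine prod_congr rfl fun k hk => ?_
    simp_all
  rw [hcol, det_permute, det_diagonal, Equiv.Perm.sign_swap hij, hprod]
  simp

theorem adjugate_diagonal_add_const_of_ne (d : n → R) (c : R) {i j : n} (hij : i ≠ j) :
    adjugate (diagonal d + of fun _ _ => c) i j = -(c * ∏ k ∈ ({i, j} : Finset n)ᶜ, d k) := by
  set M : Matrix n n R := diagonal d + of fun _ _ => c
  have hrow_i : (M.updateRow j (Pi.single i 1)).det =
      ((M.updateRow i fun _ => c).updateRow j (Pi.single i 1)).det := by
    refine det_eq_of_forall_row_eq_smul_add_const (fun p => if p = i then d i else 0) j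
      (by simp [hij.symm]) fun p q => ?_
    rcases eq_or_ne p j with rfl | hpj
    · simp [hij.symm]
    rcases eq_or_ne p i with rfl | hpi
    · rcases eq_or_ne p q with rfl | hpq
      · simp [M, hpj, add_comm]
      · simp [M, hpq, hpj, hpq.symm]
    · simp [hpi, hpj]
  have hrows : ((M.updateRow i fun _ => c).updateRow j (Pi.single i 1)).det =
      (((diagonal d).updateRow i fun _ => c).updateRow j (Pi.single i 1)).det := by
    refine det_eq_of_forall_row_eq_smul_add_const (fun p => if p = i ∨ p = j then 0 else 1) i
      (by simp) fun p q => ?_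
    rcases eq_or_ne p j with rfl | hpj
    · simp
    rcases eq_or_ne p i with rfl | hpi
    · simp [hpj]
    · simp [M, hpi, hpj, hij]
  rw [adjugate_apply, hrow_i, hrows, det_updateRow_single_updateRow_const_diagonal d c hij]

end Matrix

theorem stmt_5 (m : ℕ) (a : Fin (m + 2) → ℝ) (ha : ∀ k, 0 < a k)
    (A : Matrix (Fin (m + 1)) (Fin (m + 1)) ℝ)
    (hA : ∀ i j, A i j = (if i = j then a i.succ else 0) + a 0)
    (i j : Fin (m + 1)) (hij : i ≠ j) :
    (-1 : ℝ) ^ ((i : ℕ) + (j : ℕ)) * (A.submatrix i.succAbove j.succAbove).det =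
      -((∏ k : Fin (m + 2), a k) / (a i.succ * a j.succ)) := by
  have hA' : A = Matrix.diagonal (fun k => a k.succ) + Matrix.of fun _ _ => a 0 := by
    ext p q
    simp [hA, Matrix.diagonal_apply]
  rw [← Matrix.adjugate_fin_succ_eq_det_submatrix, hA',
    Matrix.adjugate_diagonal_add_const_of_ne _ _ hij.symm, Fin.prod_univ_succ,
    ← prod_mul_prod_compl {j, i}, prod_pair hij.symm]
  field_simp [(ha i.succ).ne', (ha j.succ).ne']
end

section
/- The matrix Σ with entries Σ_{ij} = (w_i²/‖w‖²)·(δ_{ij}(‖w‖² − w_i²) + (δ_{ij} − 1)w_j²) for i,j ∈ {1,...,n−1} is positive definite when all w_i are nonzero. -/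
/-!
With `p i = w i ^ 2` for `i ≤ n - 1` and `S = ‖w‖²`, the matrix is `diag p - S⁻¹ p pᵀ`, whose
quadratic form is `∑ pᵢ xᵢ² - (∑ pᵢ xᵢ)² / S`. By weighted Cauchy–Schwarz,
`(∑ pᵢ xᵢ)² ≤ (∑ pᵢ) (∑ pᵢ xᵢ²)`, and `∑ pᵢ = S - w_n² < S` because the last weight is nonzero.
-/

open Finset Matrix

lemma Matrix.dotProduct_diagonal_sub_smul_vecMulVec_mulVec {ι : Type*} [Fintype ι]
    [DecidableEq ι] (p x : ι → ℝ) (c : ℝ) :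
    x ⬝ᵥ ((diagonal p - c • vecMulVec p p) *ᵥ x) = ∑ i, p i * x i ^ 2 - c * (p ⬝ᵥ x) ^ 2 := by
  simp only [sub_mulVec, smul_mulVec, vecMulVec_mulVec, dotProduct_sub, dotProduct_smul,
    dotProduct_comm x p, op_smul_eq_smul, smul_eq_mul]
  congr 1
  · exact sum_congr rfl fun i _ => by rw [mulVec_diagonal]; ring
  · ring

theorem Matrix.posDef_diagonal_sub_smul_vecMulVec {ι : Type*} [Fintype ι] [DecidableEq ι]
    {p : ι → ℝ} (hp : ∀ i, 0 < p i) {S : ℝ} (hS : ∑ i, p i < S) :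
    (diagonal p - S⁻¹ • vecMulVec p p).PosDef := by
  have hS_pos : 0 < S := (sum_nonneg fun i _ => (hp i).le).trans_lt hS
  refine posDef_iff_dotProduct_mulVec.2 ⟨?_, fun x hx => ?_⟩
  · exact (isHermitian_diagonal p).sub
      ((posSemidef_vecMulVec_self_star p).isHermitian.smul (IsSelfAdjoint.all _))
  obtain ⟨j, hj⟩ := Function.ne_iff.mp hx
  have hQ : 0 < ∑ i, p i * x i ^ 2 :=
    sum_pos' (fun i _ => mul_nonneg (hp i).le (sq_nonneg _))
      ⟨j, mem_univ j, mul_pos (hp j) (sq_pos_of_ne_zero hj)⟩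
  have cauchySchwarz : (p ⬝ᵥ x) ^ 2 ≤ (∑ i, p i) * ∑ i, p i * x i ^ 2 :=
    sum_sq_le_sum_mul_sum_of_sq_le_mul univ (fun i _ => (hp i).le)
      (fun i _ => mul_nonneg (hp i).le (sq_nonneg _)) fun i _ => (by ring : _ = _).le
  rw [star_trivial, dotProduct_diagonal_sub_smul_vecMulVec_mulVec, sub_pos,
    inv_mul_lt_iff₀ hS_pos]
  calc (p ⬝ᵥ x) ^ 2 ≤ (∑ i, p i) * ∑ i, p i * x i ^ 2 := cauchySchwarz
    _ < S * ∑ i, p i * x i ^ 2 := mul_lt_mul_of_pos_right hS hQ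

theorem stmt_9 (m : ℕ) (w : Fin (m + 2) → ℝ) (hw : ∀ i, w i ≠ 0)
    (S : ℝ) (hS : S = ∑ k : Fin (m + 2), (w k) ^ 2)
    (Sig : Matrix (Fin (m + 1)) (Fin (m + 1)) ℝ)
    (hSig : ∀ i j, Sig i j =
      (w i.castSucc) ^ 2 / S *
        ((if i = j then (1 : ℝ) else 0) * (S - (w i.castSucc) ^ 2) +
          ((if i = j then (1 : ℝ) else 0) - 1) * (w j.castSucc) ^ 2)) :
    Sig.PosDef := by
  set p : Fin (m + 1) → ℝ := fun i => w i.castSucc ^ 2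
  have hp : ∀ i, 0 < p i := fun i => sq_pos_of_ne_zero (hw _)
  have hp_sum : ∑ i, p i < S := by
    rw [hS, Fin.sum_univ_castSucc (n := m + 1)]
    exact lt_add_of_pos_right _ (sq_pos_of_ne_zero (hw _))
  have hS_ne : S ≠ 0 := ((sum_nonneg fun i _ => (hp i).le).trans_lt hp_sum).ne'
  have hSig_eq : Sig = diagonal p - S⁻¹ • vecMulVec p p := by
    ext i j
    rw [hSig, Matrix.sub_apply, Matrix.smul_apply, vecMulVec_apply, diagonal_apply, smul_eq_mul]
    simp only [p]
    split_ifs with hij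
    · subst hij
      field_simp
      ring
    · field_simp
      ring
  exact hSig_eq ▸ posDef_diagonal_sub_smul_vecMulVec hp hp_sum
end

section
/- Product-of-densities factorization: for nonzero reals w_1,...,w_n and c ∈ ℝ, the function (x_1,...,x_{n−1}) ↦ (∏_{i=1}^{n−1} φ(x_i; 0, w_i))·φ(c − ∑_{i=1}^{n−1}x_i; 0, w_n) equals φ(c; 0, ‖w‖) times the density of the (n−1)-dimensional Gaussian with mean vector μ_i = c w_i²/‖w‖² and covariance matrix Σ with entries Σ_{ij} = (w_i²/‖w‖²)(δ_{ij}(‖w‖²−w_i²) + (δ_{ij}−1)w_j²). -/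
/-!
With `a i = w i ^ 2` for `i < n` and `b = w n ^ 2`, so that `S = ∑ a + b = ‖w‖²`, the covariance
is the rank-one update `Σ = diag a - S⁻¹ a aᵀ`. By Sherman–Morrison its inverse is
`diag a⁻¹ + b⁻¹ 𝟙 𝟙ᵀ`, and by the matrix determinant lemma `det Σ = (∏ a) b / S`. Completing the
square, `∑ x_i² / a_i + (c - ∑ x_i)² / b = c² / S + (x - μ)ᵀ Σ⁻¹ (x - μ)`, which matches the
exponents; the normalising constants match because `(∏ a) b = S det Σ`.
-/

open Finset Real

/-- Gaussian density with mean `μ` and variance `v`; `gpdf μ (σ^2) x = φ(x; μ, σ)`. -/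
noncomputable def gpdf (μ v x : ℝ) : ℝ :=
  (Real.sqrt (2 * Real.pi * v))⁻¹ * Real.exp (-(x - μ) ^ 2 / (2 * v))

open Matrix

noncomputable def mvGaussianPDF {ι : Type*} [Fintype ι] [DecidableEq ι] (μ : ι → ℝ)
    (cov : Matrix ι ι ℝ) (x : ι → ℝ) : ℝ :=
  (√((2 * π) ^ Fintype.card ι * cov.det))⁻¹ * exp (-(1 / 2) * ((x - μ) ⬝ᵥ cov⁻¹ *ᵥ (x - μ)))

section RankOneUpdate

variable {ι : Type*} [Fintype ι] [DecidableEq ι]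

theorem diagonal_mulVec_one {R : Type*} [Semiring R] (a : ι → R) : diagonal a *ᵥ 1 = a := by
  ext i
  rw [mulVec_diagonal, Pi.one_apply, mul_one]

theorem det_diagonal_sub_smul_vecMulVec {R : Type*} [CommRing R] (a : ι → R) (s : R) :
    (diagonal a - s • vecMulVec a a).det = (∏ i, a i) * (1 - s * ∑ i, a i) := by
  have h : diagonal a - s • vecMulVec a a = diagonal a * (1 + vecMulVec 1 (-(s • a))) := by
    rw [Matrix.mul_add, Matrix.mul_one, mul_vecMulVec, diagonal_mulVec_one, vecMulVec_neg,
      vecMulVec_smul, sub_eq_add_neg]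
  rw [h, det_mul, det_diagonal, vecMulVec_eq Unit, det_one_add_replicateCol_mul_replicateRow,
    dotProduct_one]
  simp [Finset.mul_sum, sub_eq_add_neg]

theorem diagonal_sub_smul_vecMulVec_mul {R : Type*} [Field R] {a : ι → R} {b S : R}
    (ha : ∀ i, a i ≠ 0) (hb : b ≠ 0) (hS : S ≠ 0) (hSab : S = ∑ i, a i + b) :
    (diagonal a - S⁻¹ • vecMulVec a a) * (diagonal a⁻¹ + b⁻¹ • vecMulVec 1 1) = 1 := by
  have haa : diagonal a * diagonal a⁻¹ = 1 := by
    rw [diagonal_mul_diagonal, ← diagonal_one]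
    exact congrArg diagonal (funext fun i => mul_inv_cancel₀ (ha i))
  have hva : a ᵥ* diagonal a⁻¹ = 1 := by
    ext i
    rw [vecMul_diagonal, Pi.inv_apply, mul_inv_cancel₀ (ha i), Pi.one_apply]
  have hcoef : S⁻¹ + S⁻¹ * b⁻¹ * (S - b) = b⁻¹ := by field_simp; ring
  rw [Matrix.sub_mul, Matrix.mul_add, Matrix.mul_add, haa, Matrix.mul_smul, mul_vecMulVec,
    diagonal_mulVec_one, Matrix.smul_mul, vecMulVec_mul, hva, Matrix.smul_mul, Matrix.mul_smul,
    vecMulVec_mul_vecMulVec, dotProduct_one, vecMulVec_smul, smul_smul, smul_smul,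
    eq_sub_of_add_eq hSab.symm, ← add_smul, hcoef, add_sub_cancel_right]

theorem dotProduct_diagonal_add_smul_vecMulVec_mulVec {R : Type*} [CommSemiring R]
    (d : ι → R) (e : R) (y : ι → R) :
    y ⬝ᵥ (diagonal d + e • vecMulVec 1 1) *ᵥ y = ∑ i, d i * y i ^ 2 + e * (∑ i, y i) ^ 2 := by
  rw [add_mulVec, dotProduct_add, smul_mulVec, vecMulVec_mulVec, dotProduct_smul, one_dotProduct]
  simp only [dotProduct, mulVec_diagonal, Pi.smul_apply, Pi.one_apply,
    MulOpposite.smul_eq_mul_unop, MulOpposite.unop_op, smul_eq_mul, one_mul]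
  rw [← Finset.sum_mul, sq]
  congr 1
  exact sum_congr rfl fun i _ => by ring

end RankOneUpdate

section Gaussian

variable {ι : Type*} [Fintype ι]

theorem prod_gpdf_zero {a : ι → ℝ} (ha : ∀ i, 0 ≤ a i) (x : ι → ℝ) :
    ∏ i, gpdf 0 (a i) (x i) =
      (√((2 * π) ^ Fintype.card ι * ∏ i, a i))⁻¹ * exp (-(1 / 2) * ∑ i, (a i)⁻¹ * x i ^ 2) := by
  simp only [gpdf, sub_zero]
  rw [prod_mul_distrib, ← exp_sum, prod_inv_distrib,
    ← sqrt_prod _ fun i _ => mul_nonneg (by positivity) (ha i), prod_mul_distrib, prod_const,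
    card_univ, Finset.mul_sum]
  congr 2
  exact sum_congr rfl fun i _ => by ring

theorem sum_inv_mul_sq_add_inv_mul_sq_sub_sum {a : ι → ℝ} {b S : ℝ} (ha : ∀ i, a i ≠ 0)
    (hb : b ≠ 0) (hS : S ≠ 0) (hSab : S = ∑ i, a i + b) (c : ℝ) (x : ι → ℝ) :
    ∑ i, (a i)⁻¹ * x i ^ 2 + b⁻¹ * (c - ∑ i, x i) ^ 2 =
      S⁻¹ * c ^ 2 + (∑ i, (a i)⁻¹ * (x i - c * a i / S) ^ 2 +
        b⁻¹ * (∑ i, (x i - c * a i / S)) ^ 2) := by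
  have hlin : ∑ i, (x i - c * a i / S) = ∑ i, x i - c * (∑ i, a i) / S := by
    rw [sum_sub_distrib, ← sum_div, ← mul_sum]
  have hquad : ∑ i, (a i)⁻¹ * (x i - c * a i / S) ^ 2 =
      ∑ i, (a i)⁻¹ * x i ^ 2 - 2 * c / S * ∑ i, x i + c ^ 2 / S ^ 2 * ∑ i, a i := by
    rw [mul_sum, mul_sum, ← sum_sub_distrib, ← sum_add_distrib]
    refine sum_congr rfl fun i _ => ?_
    field_simp [ha i]
    ring
  rw [hlin, hquad, eq_sub_of_add_eq hSab.symm]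
  field_simp
  ring

variable [DecidableEq ι]

theorem prod_gpdf_mul_gpdf_sub_sum {a : ι → ℝ} {b S : ℝ} (ha : ∀ i, 0 < a i) (hb : 0 < b)
    (hSab : S = ∑ i, a i + b) (c : ℝ) (x : ι → ℝ) :
    (∏ i, gpdf 0 (a i) (x i)) * gpdf 0 b (c - ∑ i, x i) =
      gpdf 0 S c * mvGaussianPDF (fun i => c * a i / S) (diagonal a - S⁻¹ • vecMulVec a a) x := by
  have hS : 0 < S := hSab ▸ add_pos_of_nonneg_of_pos (sum_nonneg fun i _ => (ha i).le) hb
  have ha' : ∀ i, a i ≠ 0 := fun i => (ha i).ne'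
  have hinv : (diagonal a - S⁻¹ • vecMulVec a a)⁻¹ = diagonal a⁻¹ + b⁻¹ • vecMulVec 1 1 :=
    inv_eq_right_inv (diagonal_sub_smul_vecMulVec_mul ha' hb.ne' hS.ne' hSab)
  have hdet : (diagonal a - S⁻¹ • vecMulVec a a).det = (∏ i, a i) * (b / S) := by
    rw [det_diagonal_sub_smul_vecMulVec, eq_sub_of_add_eq hSab.symm]
    field_simp
    ring
  have hexp := sum_inv_mul_sq_add_inv_mul_sq_sub_sum ha' hb.ne' hS.ne' hSab c x
  rw [mvGaussianPDF, hinv, hdet, dotProduct_diagonal_add_smul_vecMulVec_mulVec,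
    prod_gpdf_zero fun i => (ha i).le]
  simp only [gpdf, sub_zero, Pi.sub_apply, Pi.inv_apply]
  rw [mul_mul_mul_comm, ← exp_add, mul_mul_mul_comm _ (exp _), ← exp_add]
  congr 1
  · have hprod : 0 ≤ ∏ i, a i := prod_nonneg fun i _ => (ha i).le
    rw [← mul_inv, ← mul_inv, ← sqrt_mul (by positivity), ← sqrt_mul (by positivity)]
    congr 2
    field_simp
  · congr 1
    linear_combination (-(1 / 2 : ℝ)) * hexp

end Gaussian

theorem stmt_15 (m : ℕ) (c : ℝ) (w : Fin (m + 2) → ℝ) (hw : ∀ i, w i ≠ 0)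
    (S : ℝ) (hS : S = ∑ k : Fin (m + 2), (w k) ^ 2)
    (Sig : Matrix (Fin (m + 1)) (Fin (m + 1)) ℝ)
    (hSig : ∀ i j, Sig i j =
      (w i.castSucc) ^ 2 / S *
        ((if i = j then (1 : ℝ) else 0) * (S - (w i.castSucc) ^ 2) +
          ((if i = j then (1 : ℝ) else 0) - 1) * (w j.castSucc) ^ 2))
    (μ : Fin (m + 1) → ℝ) (hμ : ∀ i, μ i = c * (w i.castSucc) ^ 2 / S) :
    ∀ x : Fin (m + 1) → ℝ,
      (∏ i : Fin (m + 1), gpdf 0 ((w i.castSucc) ^ 2) (x i)) *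
          gpdf 0 ((w (Fin.last (m + 1))) ^ 2) (c - ∑ i : Fin (m + 1), x i) =
        gpdf 0 S c *
          ((Real.sqrt ((2 * Real.pi) ^ (m + 1) * Sig.det))⁻¹ *
            Real.exp (-(1 / 2) * dotProduct (x - μ) (Sig⁻¹.mulVec (x - μ)))) := by
  intro x
  set a : Fin (m + 1) → ℝ := fun i => w i.castSucc ^ 2
  have hSab : S = ∑ i, a i + w (Fin.last (m + 1)) ^ 2 := by rw [hS, Fin.sum_univ_castSucc]
  have hS0 : S ≠ 0 := (hS ▸ sum_pos (fun i _ => pow_two_pos_of_ne_zero (hw i)) univ_nonempty).ne'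
  have hSig' : Sig = diagonal a - S⁻¹ • vecMulVec a a := by
    ext i j
    rw [hSig, Matrix.sub_apply, diagonal_apply, Matrix.smul_apply, vecMulVec_apply, smul_eq_mul]
    split_ifs with h
    · subst h; field_simp; ring
    · field_simp; ring
  have hμ' : μ = fun i => c * a i / S := funext hμ
  rw [prod_gpdf_mul_gpdf_sub_sum (fun i => pow_two_pos_of_ne_zero (hw _))
    (pow_two_pos_of_ne_zero (hw _)) hSab c x, hSig', hμ', mvGaussianPDF, Fintype.card_fin]
end

section
/- Determinant of the conditional covariance: the matrix Σ with entries Σ_{ij} = (w_i²/‖w‖²)(δ_{ij}(‖w‖²−w_i²) + (δ_{ij}−1)w_j²), i,j ∈ {1,...,n−1}, has determinant (∏_{j=1}^n w_j²)/(∑_{i=1}^n w_i²). -/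
/-!
With `a i = w i ^ 2` for the first `n - 1` coordinates and `S = ‖w‖²`, the matrix is the
rank-one perturbation `Σ = diag a - a (a / S)ᵀ = diag a * (1 - 𝟙 (a / S)ᵀ)`. The matrix
determinant lemma gives `det Σ = (∏ a) * (1 - (∑ a) / S)`, and `S - ∑ a = w n ^ 2` supplies the
missing factor.
-/

open Finset Matrix

namespace Matrix

variable {n R : Type*} [Fintype n] [DecidableEq n] [CommRing R]

theorem det_one_add_vecMulVec (u v : n → R) : det (1 + vecMulVec u v) = 1 + v ⬝ᵥ u := by
  rw [vecMulVec_eq Unit, det_one_add_replicateCol_mul_replicateRow]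

theorem diagonal_sub_vecMulVec (a b : n → R) :
    diagonal a - vecMulVec a b = diagonal a * (1 + vecMulVec (fun _ => -1) b) := by
  ext i j
  simp [mul_add, diagonal_mul, vecMulVec_apply, sub_eq_add_neg, diagonal_apply, one_apply]

theorem det_diagonal_sub_vecMulVec (a b : n → R) :
    det (diagonal a - vecMulVec a b) = (∏ i, a i) * (1 - ∑ i, b i) := by
  rw [diagonal_sub_vecMulVec, det_mul, det_diagonal, det_one_add_vecMulVec]
  simp [dotProduct, sub_eq_add_neg]

end Matrix

theorem stmt_17 (m : ℕ) (w : Fin (m + 2) → ℝ) (hw : ∀ i, w i ≠ 0)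
    (S : ℝ) (hS : S = ∑ k : Fin (m + 2), (w k) ^ 2)
    (Sig : Matrix (Fin (m + 1)) (Fin (m + 1)) ℝ)
    (hSig : ∀ i j, Sig i j =
      (w i.castSucc) ^ 2 / S *
        ((if i = j then (1 : ℝ) else 0) * (S - (w i.castSucc) ^ 2) +
          ((if i = j then (1 : ℝ) else 0) - 1) * (w j.castSucc) ^ 2)) :
    Sig.det = (∏ j : Fin (m + 2), (w j) ^ 2) / (∑ i : Fin (m + 2), (w i) ^ 2) := by
  set a : Fin (m + 1) → ℝ := fun i => w i.castSucc ^ 2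
  have hS0 : S ≠ 0 := hS ▸ (sum_pos (fun k _ => by have := hw k; positivity) univ_nonempty).ne'
  have hSig_eq : Sig = diagonal a - vecMulVec a (fun j => a j / S) := by
    ext i j
    rw [hSig, Matrix.sub_apply, diagonal_apply, vecMulVec_apply]
    split_ifs with hij
    · subst hij; field_simp; ring
    · ring
  have hS_split : S = ∑ j, a j + w (Fin.last (m + 1)) ^ 2 := by
    rw [hS, Fin.sum_univ_castSucc]
  rw [hSig_eq, det_diagonal_sub_vecMulVec, ← hS, Fin.prod_univ_castSucc (f := fun j => w j ^ 2),
    ← sum_div]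
  field_simp
  rw [hS_split]
  ring
end
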